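/- Let w : ℝ → ℝ be a 2π-periodic function of class C⁴ satisfying ∫₀^{2π} w(θ) dθ = 0, ∫₀^{2π} w(θ)·cos(θ) dθ = 0 and ∫₀^{2π} w(θ)·sin(θ) dθ = 0. Then ∫₀^{2π} (w''(θ) + w''''(θ))² dθ ≥ 144 · ∫₀^{2π} w(θ)² dθ. -/
import Mathlib

open Real

namespace SG13

open Complex MeasureTheory Function Set intervalIntegral

noncomputable section

lemma pi2_pos : (0:ℝ) < 2 * π := by positivity

instance : Fact ((0:ℝ) < 2 * π) := ⟨pi2_pos⟩

lemma hab : (0:ℝ) < 0 + 2 * π := by positivity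

/-- periodic lift agrees with liftIoc -/
lemma lift_eq_liftIoc {u : ℝ → ℂ} (hper : Function.Periodic u (2 * π)) :
    hper.lift = AddCircle.liftIoc (2 * π) 0 u := by
  funext z
  induction z using QuotientAddGroup.induction_on with
  | H x =>
    set y := toIocMod pi2_pos 0 x with hy
    have hmem : y ∈ Set.Ioc 0 (0 + 2 * π) := toIocMod_mem_Ioc pi2_pos 0 x
    have hsub : x - y = toIocDiv pi2_pos 0 x • (2 * π) := self_sub_toIocMod pi2_pos 0 x
    have hcoe : ((y : ℝ) : AddCircle (2 * π)) = ((x : ℝ) : AddCircle (2 * π)) := by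
      rw [QuotientAddGroup.eq_iff_sub_mem]
      rw [show y - x = (-(toIocDiv pi2_pos 0 x)) • (2 * π) by
        rw [neg_smul, ← hsub]; ring]
      exact AddSubgroup.zsmul_mem_zmultiples _ _
    rw [Function.Periodic.lift_coe, ← hcoe, AddCircle.liftIoc_coe_apply hmem]
    have : u y = u (x - toIocDiv pi2_pos 0 x • (2 * π)) := by rw [← hsub]; ring_nf
    rw [this, hper.sub_zsmul_eq]

lemma lift_coeff {u : ℝ → ℂ} (hper : Function.Periodic u (2 * π)) (n : ℤ) :
    fourierCoeff (hper.lift : AddCircle (2 * π) → ℂ) n = fourierCoeffOn hab u n := by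
  have h2 : fourierCoeff (AddCircle.liftIoc (2 * π) 0 u) n = fourierCoeffOn hab u n :=
    fourierCoeff_liftIoc_eq u n
  rw [← h2, lift_eq_liftIoc]

lemma coeff_deriv {u u' : ℝ → ℂ} (hu : ∀ x, HasDerivAt u (u' x) x)
    (hcont : Continuous u') (hper : Function.Periodic u (2 * π)) {n : ℤ} (hn : n ≠ 0) :
    fourierCoeffOn hab u' n = (Complex.I * n) * fourierCoeffOn hab u n := by
  have h := fourierCoeffOn_of_hasDerivAt hab hn (fun x _ => hu x)
    (hcont.intervalIntegrable _ _)
  have hper0 : u (0 + 2 * π) = u 0 := hper 0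
  rw [hper0, sub_self, mul_zero, zero_sub] at h
  have hπ : (π : ℂ) ≠ 0 := Complex.ofReal_ne_zero.mpr Real.pi_ne_zero
  have hnc : (n : ℂ) ≠ 0 := Int.cast_ne_zero.mpr hn
  rw [h]
  push_cast
  field_simp
  ring

lemma coeff_add {u v : ℝ → ℂ} (hu : Continuous u) (hv : Continuous v) (n : ℤ) :
    fourierCoeffOn hab (fun x => u x + v x) n
      = fourierCoeffOn hab u n + fourierCoeffOn hab v n := by
  simp only [fourierCoeffOn_eq_integral, smul_add]
  rw [intervalIntegral.integral_add]
  · rw [smul_add]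
  · exact (((map_continuous (fourier (-n))).comp
      (AddCircle.continuous_mk' _)).smul hu).intervalIntegrable _ _
  · exact (((map_continuous (fourier (-n))).comp
      (AddCircle.continuous_mk' _)).smul hv).intervalIntegrable _ _

lemma coeff_zero_deriv {u u' : ℝ → ℂ} (hu : ∀ x, HasDerivAt u (u' x) x)
    (hcont : Continuous u') (hper : Function.Periodic u (2 * π)) :
    fourierCoeffOn hab u' 0 = 0 := by
  rw [fourierCoeffOn_eq_integral]
  have : ∫ x in (0:ℝ)..0 + 2 * π, fourier (-0) (x : AddCircle (0 + 2 * π - 0)) • u' x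
      = ∫ x in (0:ℝ)..0 + 2 * π, u' x := by
    apply intervalIntegral.integral_congr
    intro x _
    simp [fourier_zero]
  rw [this, intervalIntegral.integral_eq_sub_of_hasDerivAt (fun x _ => hu x)
    (hcont.intervalIntegrable _ _), hper 0, sub_self, smul_zero]

/-- Continuous lift of a continuous periodic function to the circle. -/
def clift {u : ℝ → ℂ} (hper : Function.Periodic u (2 * π)) (hc : Continuous u) :
    C(AddCircle (2 * π), ℂ) :=
  ⟨hper.lift, hc.quotient_liftOn' _⟩

lemma parseval {u : ℝ → ℂ} (hper : Function.Periodic u (2 * π)) (hc : Continuous u) :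
    HasSum (fun n : ℤ => ‖fourierCoeff (hper.lift : AddCircle (2 * π) → ℂ) n‖ ^ 2)
      ((1 / (2 * π)) * ∫ x in (0:ℝ)..0 + 2 * π, ‖u x‖ ^ 2) := by
  set F : C(AddCircle (2 * π), ℂ) := clift hper hc with hF
  have hlift : (F : AddCircle (2 * π) → ℂ) = hper.lift := rfl
  set Flp : Lp ℂ 2 (@AddCircle.haarAddCircle (2 * π) _) :=
    ContinuousMap.toLp 2 AddCircle.haarAddCircle ℂ F with hFlp
  have hcoeff : ∀ n : ℤ, fourierCoeff (Flp : AddCircle (2 * π) → ℂ) n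
      = fourierCoeff (hper.lift : AddCircle (2 * π) → ℂ) n := by
    intro n
    rw [← hlift]
    exact fourierCoeff_toLp F n
  have hsummable : Summable (fun n : ℤ =>
      ‖fourierCoeff (hper.lift : AddCircle (2 * π) → ℂ) n‖ ^ 2) := by
    have h1 := (lp.memℓp (fourierBasis.repr Flp)).summable
      (by norm_num : (0:ℝ) < (2 : ENNReal).toReal)
    have : (fun n : ℤ => ‖fourierBasis.repr Flp n‖ ^ (2 : ENNReal).toReal)
        = fun n : ℤ => ‖fourierCoeff (hper.lift : AddCircle (2 * π) → ℂ) n‖ ^ 2 := by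
      funext n
      rw [fourierBasis_repr, hcoeff n]
      norm_num
    rwa [this] at h1
  have htsum := tsum_sq_fourierCoeff Flp
  simp_rw [hcoeff] at htsum
  have hint : ∫ t : AddCircle (2 * π), ‖Flp t‖ ^ 2 ∂AddCircle.haarAddCircle
      = (1 / (2 * π)) * ∫ x in (0:ℝ)..0 + 2 * π, ‖u x‖ ^ 2 := by
    have h1 : ∫ t : AddCircle (2 * π), ‖Flp t‖ ^ 2 ∂AddCircle.haarAddCircle
        = ∫ t : AddCircle (2 * π), ‖F t‖ ^ 2 ∂AddCircle.haarAddCircle := by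
      apply MeasureTheory.integral_congr_ae
      filter_upwards [ContinuousMap.coeFn_toLp (p := 2) AddCircle.haarAddCircle (𝕜 := ℂ) F]
        with t ht
      rw [ht]
    have h2 : ∫ x in (0:ℝ)..0 + 2 * π, ‖u x‖ ^ 2
        = ∫ t : AddCircle (2 * π), ‖F t‖ ^ 2 ∂(volume) := by
      rw [← AddCircle.intervalIntegral_preimage (2 * π) 0 (fun t => ‖F t‖ ^ 2)]
      apply intervalIntegral.integral_congr
      intro x _
      simp only [hlift, Function.Periodic.lift_coe]
    have h3 : ∫ t : AddCircle (2 * π), ‖F t‖ ^ 2 ∂(volume)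
        = (2 * π) * ∫ t : AddCircle (2 * π), ‖F t‖ ^ 2 ∂AddCircle.haarAddCircle := by
      rw [AddCircle.volume_eq_smul_haarAddCircle, MeasureTheory.integral_smul_measure _ _,
        ENNReal.toReal_ofReal pi2_pos.le, smul_eq_mul]
    rw [h1, h2, h3]
    field_simp
  rw [← hint, ← htsum]
  exact hsummable.hasSum

lemma fourier_neg_one_eq (x : ℝ) :
    fourier (-1) (x : AddCircle (0 + 2 * π - 0))
      = (Real.cos x : ℂ) - (Real.sin x : ℂ) * Complex.I := by
  rw [fourier_coe_apply]
  have h : 2 * (π:ℂ) * Complex.I * (((-1 : ℤ) : ℂ)) * (x:ℂ) / ((0 + 2 * π - 0 : ℝ) : ℂ)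
      = (-(x:ℂ)) * Complex.I := by
    have hπ : (π : ℂ) ≠ 0 := Complex.ofReal_ne_zero.mpr Real.pi_ne_zero
    push_cast
    field_simp
    ring
  rw [h, Complex.exp_mul_I]
  push_cast [Complex.cos_neg, Complex.sin_neg, ← Complex.ofReal_cos, ← Complex.ofReal_sin]
  ring

lemma fourier_one_eq (x : ℝ) :
    fourier (-(-1)) (x : AddCircle (0 + 2 * π - 0))
      = (Real.cos x : ℂ) + (Real.sin x : ℂ) * Complex.I := by
  rw [fourier_coe_apply]
  have h : 2 * (π:ℂ) * Complex.I * (((-(-1) : ℤ) : ℂ)) * (x:ℂ) / ((0 + 2 * π - 0 : ℝ) : ℂ)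
      = ((x:ℂ)) * Complex.I := by
    have hπ : (π : ℂ) ≠ 0 := Complex.ofReal_ne_zero.mpr Real.pi_ne_zero
    push_cast
    field_simp
    ring
  rw [h, Complex.exp_mul_I]
  push_cast [← Complex.ofReal_cos, ← Complex.ofReal_sin]
  ring

lemma coeff_orth (w : ℝ → ℝ) (hc : Continuous w)
    (h0 : ∫ θ in (0:ℝ)..(2 * π), w θ = 0)
    (hcos : ∫ θ in (0:ℝ)..(2 * π), w θ * Real.cos θ = 0)
    (hsin : ∫ θ in (0:ℝ)..(2 * π), w θ * Real.sin θ = 0) :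
    ∀ n : ℤ, n = 0 ∨ n = 1 ∨ n = -1 →
      fourierCoeffOn hab (fun x => (w x : ℂ)) n = 0 := by
  have hza : (0:ℝ) + 2 * π = 2 * π := by ring
  intro n hn
  rw [fourierCoeffOn_eq_integral]
  rcases hn with rfl | rfl | rfl
  · have : ∫ x in (0:ℝ)..0 + 2 * π, fourier (-0) (x : AddCircle (0 + 2 * π - 0)) • ((w x : ℂ))
        = ((∫ x in (0:ℝ)..0 + 2 * π, w x : ℝ) : ℂ) := by
      rw [← intervalIntegral.integral_ofReal]
      apply intervalIntegral.integral_congr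
      intro x _
      simp [fourier_zero]
    rw [this, hza, h0]
    simp
  · have : ∫ x in (0:ℝ)..0 + 2 * π, fourier (-1) (x : AddCircle (0 + 2 * π - 0)) • ((w x : ℂ))
        = ((∫ x in (0:ℝ)..0 + 2 * π, w x * Real.cos x : ℝ) : ℂ)
          - ((∫ x in (0:ℝ)..0 + 2 * π, w x * Real.sin x : ℝ) : ℂ) * Complex.I := by
      rw [← intervalIntegral.integral_ofReal, ← intervalIntegral.integral_ofReal,
        ← intervalIntegral.integral_mul_const, ← intervalIntegral.integral_sub]
      · apply intervalIntegral.integral_congr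
        intro x _
        simp only [smul_eq_mul, fourier_neg_one_eq]
        push_cast
        ring
      · exact (Continuous.intervalIntegrable (by continuity) _ _)
      · exact (Continuous.intervalIntegrable (by continuity) _ _)
    rw [this, hza, hcos, hsin]
    simp
  · have : ∫ x in (0:ℝ)..0 + 2 * π, fourier (-(-1)) (x : AddCircle (0 + 2 * π - 0)) • ((w x : ℂ))
        = ((∫ x in (0:ℝ)..0 + 2 * π, w x * Real.cos x : ℝ) : ℂ)
          + ((∫ x in (0:ℝ)..0 + 2 * π, w x * Real.sin x : ℝ) : ℂ) * Complex.I := by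
      rw [← intervalIntegral.integral_ofReal, ← intervalIntegral.integral_ofReal,
        ← intervalIntegral.integral_mul_const, ← intervalIntegral.integral_add]
      · apply intervalIntegral.integral_congr
        intro x _
        simp only [smul_eq_mul, fourier_one_eq]
        push_cast
        ring
      · exact (Continuous.intervalIntegrable (by continuity) _ _)
      · exact (Continuous.intervalIntegrable (by continuity) _ _)
    rw [this, hza, hcos, hsin]
    simp

end

end SG13

/-- Spectral-gap estimate: if w is 2π-periodic, C⁴, and orthogonal to 1,
    cos θ and sin θ, then ∫ (w'' + w'''')² ≥ 144 ∫ w². -/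
theorem stmt_13 (w : ℝ → ℝ) (hper : Function.Periodic w (2 * π))
    (hC4 : ContDiff ℝ 4 w)
    (h0 : ∫ θ in (0:ℝ)..(2 * π), w θ = 0)
    (hcos : ∫ θ in (0:ℝ)..(2 * π), w θ * Real.cos θ = 0)
    (hsin : ∫ θ in (0:ℝ)..(2 * π), w θ * Real.sin θ = 0) :
    144 * ∫ θ in (0:ℝ)..(2 * π), (w θ) ^ 2 ≤
      ∫ θ in (0:ℝ)..(2 * π), (iteratedDeriv 2 w θ + iteratedDeriv 4 w θ) ^ 2 := by
  classical
  open SG13 Complex in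
  have hza : (0:ℝ) + 2 * π = 2 * π := by ring
  -- basic facts about iterated derivatives
  have hcont : ∀ k : ℕ, k ≤ 4 → Continuous (iteratedDeriv k w) := by
    intro k hk
    exact hC4.continuous_iteratedDeriv k (by exact_mod_cast hk)
  have hder : ∀ k : ℕ, k < 4 → ∀ x, HasDerivAt (iteratedDeriv k w)
      (iteratedDeriv (k + 1) w x) x := by
    intro k hk x
    have hd : Differentiable ℝ (iteratedDeriv k w) :=
      hC4.differentiable_iteratedDeriv k (by exact_mod_cast hk)
    rw [iteratedDeriv_succ]
    exact (hd x).hasDerivAt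
  have hperk : ∀ k : ℕ, Function.Periodic (iteratedDeriv k w) (2 * π) := by
    intro k
    induction k with
    | zero => simpa [iteratedDeriv_zero] using hper
    | succ k ih =>
      intro x
      rw [iteratedDeriv_succ]
      have h1 : deriv (fun y => iteratedDeriv k w (y + 2 * π)) x
          = deriv (iteratedDeriv k w) (x + 2 * π) := deriv_comp_add_const _ _ _
      rw [← h1]
      congr 1
      funext y
      exact ih y
  -- complexified derivatives
  set u : ℕ → ℝ → ℂ := fun k x => ((iteratedDeriv k w x : ℝ) : ℂ) with hu
  have hu_per : ∀ k : ℕ, Function.Periodic (u k) (2 * π) := by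
    intro k x
    simp only [hu]
    rw [hperk k x]
  have hu_cont : ∀ k : ℕ, k ≤ 4 → Continuous (u k) := by
    intro k hk
    exact Complex.continuous_ofReal.comp (hcont k hk)
  have hu_der : ∀ k : ℕ, k < 4 → ∀ x, HasDerivAt (u k) (u (k + 1) x) x := by
    intro k hk x
    exact (hder k hk x).ofReal_comp
  -- Fourier coefficients
  set c : ℤ → ℂ := fun n => fourierCoeffOn SG13.hab (u 0) n with hc
  set g : ℝ → ℂ := fun x => u 2 x + u 4 x with hg
  have hg_per : Function.Periodic g (2 * π) := by
    intro x
    simp only [hg]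
    rw [hu_per 2 x, hu_per 4 x]
  have hg_cont : Continuous g := (hu_cont 2 (by norm_num)).add (hu_cont 4 (by norm_num))
  -- coefficient identity
  have hchain : ∀ n : ℤ, n ≠ 0 → ∀ k : ℕ, k < 4 →
      fourierCoeffOn SG13.hab (u (k + 1)) n
        = (Complex.I * n) * fourierCoeffOn SG13.hab (u k) n := by
    intro n hn k hk
    exact coeff_deriv (hu_der k hk) (hu_cont (k + 1) (by omega)) (hu_per k) hn
  have hg_coeff : ∀ n : ℤ, fourierCoeffOn SG13.hab g n
      = ((n : ℂ) ^ 4 - (n : ℂ) ^ 2) * c n := by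
    intro n
    have hadd : fourierCoeffOn SG13.hab g n
        = fourierCoeffOn SG13.hab (u 2) n + fourierCoeffOn SG13.hab (u 4) n :=
      coeff_add (hu_cont 2 (by norm_num)) (hu_cont 4 (by norm_num)) n
    by_cases hn : n = 0
    · subst hn
      rw [hadd, coeff_zero_deriv (hu_der 1 (by norm_num)) (hu_cont 2 (by norm_num)) (hu_per 1),
        coeff_zero_deriv (hu_der 3 (by norm_num)) (hu_cont 4 (by norm_num)) (hu_per 3)]
      simp
    · rw [hadd, hchain n hn 3 (by norm_num), hchain n hn 2 (by norm_num),
        hchain n hn 1 (by norm_num), hchain n hn 0 (by norm_num)]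
      have hcn : fourierCoeffOn SG13.hab (u 0) n = c n := rfl
      rw [hcn]
      linear_combination ((n:ℂ)^2 * (c n) + (n:ℂ)^4 * (c n) * (Complex.I^2 - 1)) * Complex.I_sq
  -- orthogonality
  have hu0 : u 0 = fun x => ((w x : ℝ) : ℂ) := by
    funext x
    simp only [hu, iteratedDeriv_zero]
  have horth : ∀ n : ℤ, n = 0 ∨ n = 1 ∨ n = -1 → c n = 0 := by
    intro n hn
    rw [hc]
    simp only
    rw [hu0]
    exact coeff_orth w hC4.continuous h0 hcos hsin n hn
  -- Parseval for u 0 and g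
  have hF := parseval (hu_per 0) (hu_cont 0 (by norm_num))
  have hG := parseval hg_per hg_cont
  simp only [lift_coeff] at hF hG
  -- rewrite the sums
  have hFsum : HasSum (fun n : ℤ => ‖c n‖ ^ 2)
      ((1 / (2 * π)) * ∫ x in (0:ℝ)..(2 * π), (w x) ^ 2) := by
    have heq : ∫ x in (0:ℝ)..0 + 2 * π, ‖u 0 x‖ ^ 2
        = ∫ x in (0:ℝ)..(2 * π), (w x) ^ 2 := by
      rw [hza]
      apply intervalIntegral.integral_congr
      intro x _
      rw [hu0]
      simp only [Complex.norm_real, Real.norm_eq_abs, _root_.sq_abs]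
    rw [← heq]
    exact hF
  have hGsum : HasSum (fun n : ℤ => ‖((n : ℂ) ^ 4 - (n : ℂ) ^ 2) * c n‖ ^ 2)
      ((1 / (2 * π)) * ∫ x in (0:ℝ)..(2 * π),
        (iteratedDeriv 2 w x + iteratedDeriv 4 w x) ^ 2) := by
    have heq : ∫ x in (0:ℝ)..0 + 2 * π, ‖g x‖ ^ 2
        = ∫ x in (0:ℝ)..(2 * π), (iteratedDeriv 2 w x + iteratedDeriv 4 w x) ^ 2 := by
      rw [hza]
      apply intervalIntegral.integral_congr
      intro x _
      have : g x = ((iteratedDeriv 2 w x + iteratedDeriv 4 w x : ℝ) : ℂ) := by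
        simp only [hg, hu]
        push_cast
        ring
      show ‖g x‖ ^ 2 = (iteratedDeriv 2 w x + iteratedDeriv 4 w x) ^ 2
      rw [this]
      simp only [Complex.norm_real, Real.norm_eq_abs, _root_.sq_abs]
    rw [← heq]
    have : (fun n : ℤ => ‖((n : ℂ) ^ 4 - (n : ℂ) ^ 2) * c n‖ ^ 2)
        = fun n : ℤ => ‖fourierCoeffOn SG13.hab g n‖ ^ 2 := by
      funext n
      rw [hg_coeff n]
    rw [this]
    exact hG
  -- termwise comparison
  have hterm : ∀ n : ℤ, 144 * ‖c n‖ ^ 2 ≤ ‖((n : ℂ) ^ 4 - (n : ℂ) ^ 2) * c n‖ ^ 2 := by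
    intro n
    by_cases hsmall : n = 0 ∨ n = 1 ∨ n = -1
    · rw [horth n hsmall]
      simp
    · push_neg at hsmall
      obtain ⟨h1, h2, h3⟩ := hsmall
      have habs : (2 : ℤ) ≤ |n| := by
        rcases abs_cases n with ⟨h, _⟩ | ⟨h, _⟩ <;> rw [h] <;> omega
      have habsr : (2 : ℝ) ≤ |(n : ℝ)| := by
        rw [← Int.cast_abs]
        exact_mod_cast habs
      have hsq : (4 : ℝ) ≤ (n : ℝ) ^ 2 := by
        nlinarith [_root_.sq_abs ((n : ℝ))]
      have hnorm : (12 : ℝ) ≤ ‖((n : ℂ) ^ 4 - (n : ℂ) ^ 2)‖ := by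
        have hcast : ((n : ℂ) ^ 4 - (n : ℂ) ^ 2) = (((n:ℝ) ^ 4 - (n:ℝ) ^ 2 : ℝ) : ℂ) := by
          push_cast
          ring
        rw [hcast, Complex.norm_real]
        rw [Real.norm_eq_abs, _root_.abs_of_nonneg (show (0:ℝ) ≤ (n:ℝ) ^ 4 - (n:ℝ) ^ 2 by nlinarith)]
        nlinarith
      rw [norm_mul, mul_pow]
      have hc_nonneg : (0:ℝ) ≤ ‖c n‖ ^ 2 := sq_nonneg _
      have h144 : (144:ℝ) ≤ ‖((n : ℂ) ^ 4 - (n : ℂ) ^ 2)‖ ^ 2 := by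
        nlinarith [norm_nonneg ((n : ℂ) ^ 4 - (n : ℂ) ^ 2)]
      exact mul_le_mul_of_nonneg_right h144 hc_nonneg
  -- compare sums
  have hle := hasSum_le hterm (hFsum.mul_left 144) hGsum
  have hπ : (0:ℝ) < π := Real.pi_pos
  rw [show (144 : ℝ) * ((1 / (2 * π)) * ∫ x in (0:ℝ)..(2 * π), (w x) ^ 2)
      = (1 / (2 * π)) * (144 * ∫ x in (0:ℝ)..(2 * π), (w x) ^ 2) by ring] at hle
  have := mul_le_mul_of_nonneg_left hle (le_of_lt (show (0:ℝ) < 2 * π by positivity))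
  calc 144 * ∫ θ in (0:ℝ)..(2 * π), (w θ) ^ 2
      = (2 * π) * ((1 / (2 * π)) * (144 * ∫ x in (0:ℝ)..(2 * π), (w x) ^ 2)) := by
        field_simp
    _ ≤ (2 * π) * ((1 / (2 * π)) * ∫ x in (0:ℝ)..(2 * π),
          (iteratedDeriv 2 w x + iteratedDeriv 4 w x) ^ 2) := this
    _ = ∫ θ in (0:ℝ)..(2 * π), (iteratedDeriv 2 w θ + iteratedDeriv 4 w θ) ^ 2 := by
        field_simp
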